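/- arXiv:2011.03892 — 2 statements merged into one kernel-verified Lean document; each statement's English description precedes it below -/
import Mathlib

section
/- (Observation 5.3) Let P be a directed path in G from a vertex of L_1 to a vertex of L_{k+1} that contains neither u, nor v, nor any ba-type back edge. If P visits A, then P visits L_4 both before and after visiting A. If P visits B, then P visits L_{k-2} both before and after visiting B. -/
namespace DiamLB

/-! ## Generic directed-graph notions -/

/-- There is a directed walk of length `n` from `a` to `b`. -/
def HasWalkLen {V : Type*} (Adj : V → V → Prop) : ℕ → V → V → Prop
  | 0, a, b => a = b
  | n + 1, a, b => ∃ c, Adj a c ∧ HasWalkLen Adj n c b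

/-- `P 0, P 1, …, P n` is a directed walk. -/
def IsWalk {V : Type*} (Adj : V → V → Prop) (P : ℕ → V) (n : ℕ) : Prop :=
  ∀ t, t < n → Adj (P t) (P (t + 1))

/-- The shortest-path distance from `a` to `b` is at most `m`. -/
def DistLE {V : Type*} (Adj : V → V → Prop) (a b : V) (m : ℕ) : Prop :=
  ∃ n ≤ m, HasWalkLen Adj n a b

/-! ## The construction (Section 3, `k ≥ 5`) -/

/-- Boolean vectors of length `d`, i.e. elements of `{0,1}^d`. -/
abbrev Vec (d : ℕ) := Fin d → Bool

/-- The all-ones vector. -/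
def ones (d : ℕ) : Vec d := fun _ => true

/-- Tags naming the layers of the construction. -/
inductive Tag : Type
  | L (i : ℕ)
  | L' (i : ℕ)
  | A (i : ℕ)
  | B (i : ℕ)

/-- Potential vertices of the construction: a tagged partial tuple of vectors
(position `j : Fin k` holding the vector with 1-based index `j+1`) together with a
coordinate array `x` (1-based entry `x_ℓ` at position `ℓ-1 : Fin (k-1)`), plus the two
special vertices `uu` (the vertex `u`) and `vv` (the vertex `v`).  Vertices carrying no
coordinate array in the paper are modelled with the all-zero coordinate array. -/
inductive Vert (k d : ℕ) : Type
  | node (tag : Tag) (p : Fin k → Option (Vec d)) (x : Fin (k - 1) → Fin d) : Vert k d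
  | uu : Vert k d
  | vv : Vert k d

/-- The positions (0-based) satisfying `F` are filled by vectors of `S`, and the other
positions are empty. -/
def FillsS (k d : ℕ) (S : Finset (Vec d)) (F : ℕ → Prop) (p : Fin k → Option (Vec d)) :
    Prop :=
  ∀ j : Fin k, (F (j : ℕ) → ∃ a ∈ S, p j = some a) ∧ (¬ F (j : ℕ) → p j = none)

/-- The dummy (all-zero) coordinate array, used for vertices that carry no coordinate
array in the paper. -/
def ZeroX (k d : ℕ) (x : Fin (k - 1) → Fin d) : Prop :=
  ∀ ℓ, (x ℓ : ℕ) = 0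

/-- The compatibility condition between the vector tuple and the coordinate array of a
vertex of `L_i` (Table 1): for `1 ≤ j ≤ k-i` (the `a_j`), `a_j[x_ℓ] = 1` for all
`1 ≤ ℓ ≤ k-j`, and for `k-i+3 ≤ j ≤ k` (the `b_j`), `b_j[x_ℓ] = 1` for all
`k-j+1 ≤ ℓ ≤ k-1`.  (Everything is 0-based here: position `j` holds the vector with
1-based index `j+1`, and `x ℓ` is the 1-based coordinate `x_{ℓ+1}`.) -/
def BitCond (k d : ℕ) (i : ℕ) (p : Fin k → Option (Vec d)) (x : Fin (k - 1) → Fin d) :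
    Prop :=
  (∀ j : Fin k, (j : ℕ) < k - i → ∀ w, p j = some w →
    ∀ ℓ : Fin (k - 1), (ℓ : ℕ) < k - ((j : ℕ) + 1) → w (x ℓ) = true) ∧
  (∀ j : Fin k, k - i + 2 ≤ (j : ℕ) → ∀ w, p j = some w →
    ∀ ℓ : Fin (k - 1), k - ((j : ℕ) + 1) ≤ (ℓ : ℕ) → w (x ℓ) = true)

/-- The layer `L_i`, for `i = 1, …, k+1`. -/
def setL (k d : ℕ) (S : Finset (Vec d)) (i : ℕ) : Set (Vert k d) :=
  { w | ∃ p x, w = Vert.node (Tag.L i) p x ∧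
      ((i = 1 ∧ FillsS k d S (fun j => j < k - 1) p ∧ ZeroX k d x) ∨
       (i = k + 1 ∧ FillsS k d S (fun j => 1 ≤ j) p ∧ ZeroX k d x) ∨
       (2 ≤ i ∧ i ≤ k ∧ FillsS k d S (fun j => j < k - i ∨ k - i + 2 ≤ j) p ∧
         BitCond k d i p x)) }

/-- The layer `L'_i`, for `i = 3, …, k-1`: same vector tuples as `L_i` but with an
arbitrary coordinate array. -/
def setL' (k d : ℕ) (S : Finset (Vec d)) (i : ℕ) : Set (Vert k d) :=
  { w | ∃ p x, w = Vert.node (Tag.L' i) p x ∧ 3 ≤ i ∧ i ≤ k - 1 ∧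
      FillsS k d S (fun j => j < k - i ∨ k - i + 2 ≤ j) p }

/-- The set `A_i`, for `i = 4, …, k-1`: tuples `(a_1, …, a_{k-i})`. -/
def setA (k d : ℕ) (S : Finset (Vec d)) (i : ℕ) : Set (Vert k d) :=
  { w | ∃ p x, w = Vert.node (Tag.A i) p x ∧ 4 ≤ i ∧ i ≤ k - 1 ∧
      FillsS k d S (fun j => j < k - i) p ∧ ZeroX k d x }

/-- The set `B_i`, for `i = 3, …, k-2`: tuples `(b_{k-i+3}, …, b_k)`. -/
def setB (k d : ℕ) (S : Finset (Vec d)) (i : ℕ) : Set (Vert k d) :=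
  { w | ∃ p x, w = Vert.node (Tag.B i) p x ∧ 3 ≤ i ∧ i ≤ k - 2 ∧
      FillsS k d S (fun j => k - i + 2 ≤ j) p ∧ ZeroX k d x }

/-- `L = ∪_i L_i`. -/
def setLall (k d : ℕ) (S : Finset (Vec d)) : Set (Vert k d) := ⋃ i, setL k d S i

/-- `L' = ∪_i L'_i`. -/
def setL'all (k d : ℕ) (S : Finset (Vec d)) : Set (Vert k d) := ⋃ i, setL' k d S i

/-- `A = ∪_i A_i`. -/
def setAall (k d : ℕ) (S : Finset (Vec d)) : Set (Vert k d) := ⋃ i, setA k d S i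

/-- `B = ∪_i B_i`. -/
def setBall (k d : ℕ) (S : Finset (Vec d)) : Set (Vert k d) := ⋃ i, setB k d S i

/-- Level `i` is `L_i ∪ L'_i ∪ A_i ∪ B_i`. -/
def level (k d : ℕ) (S : Finset (Vec d)) (i : ℕ) : Set (Vert k d) :=
  setL k d S i ∪ setL' k d S i ∪ setA k d S i ∪ setB k d S i

/-- The vertex set of the graph `G`. -/
def VertexSet (k d : ℕ) (S : Finset (Vec d)) : Set (Vert k d) :=
  setLall k d S ∪ setL'all k d S ∪ setAall k d S ∪ setBall k d S ∪ {Vert.uu, Vert.vv}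

/-! ### Edges -/

/-- One orientation of the (undirected) swap edges.  Between `L_i` and `L_{i+1}`
(`2 ≤ i ≤ k-1`) the vector `a_{k-i}` (0-based position `k-i-1`) is exchanged for the
vector `b_{k-i+2}` (0-based position `k-i+1`), keeping the coordinate array; between
`L_1` and `L_2` the vector `a_{k-1}` is exchanged for a coordinate array; between
`L_{k+1}` and `L_k` the vector `b_2` is exchanged for a coordinate array. -/
def SwapE (k d : ℕ) (S : Finset (Vec d)) (α β : Vert k d) : Prop :=
  (∃ i p x p' x', 2 ≤ i ∧ i ≤ k - 1 ∧
      α = Vert.node (Tag.L i) p x ∧ β = Vert.node (Tag.L (i + 1)) p' x' ∧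
      α ∈ setL k d S i ∧ β ∈ setL k d S (i + 1) ∧ x' = x ∧
      (∀ j : Fin k, (j : ℕ) ≠ k - i - 1 → (j : ℕ) ≠ k - i + 1 → p' j = p j)) ∨
  (∃ p x p' x',
      α = Vert.node (Tag.L 1) p x ∧ β = Vert.node (Tag.L 2) p' x' ∧
      α ∈ setL k d S 1 ∧ β ∈ setL k d S 2 ∧
      (∀ j : Fin k, (j : ℕ) ≠ k - 2 → p' j = p j)) ∨
  (∃ p x p' x',
      α = Vert.node (Tag.L (k + 1)) p x ∧ β = Vert.node (Tag.L k) p' x' ∧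
      α ∈ setL k d S (k + 1) ∧ β ∈ setL k d S k ∧
      (∀ j : Fin k, (j : ℕ) ≠ 1 → p' j = p j))

/-- One orientation of the (undirected) vector-change edges between `L_i` and `L'_i`
(`3 ≤ i ≤ k-1`): same coordinate array, same vectors except possibly one of `a_{k-i}`
(position `k-i-1`) or `b_{k-i+3}` (position `k-i+2`). -/
def VecE (k d : ℕ) (S : Finset (Vec d)) (α β : Vert k d) : Prop :=
  ∃ i p x p' x', 3 ≤ i ∧ i ≤ k - 1 ∧
    α = Vert.node (Tag.L i) p x ∧ β = Vert.node (Tag.L' i) p' x' ∧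
    α ∈ setL k d S i ∧ β ∈ setL' k d S i ∧ x' = x ∧
    ((∀ j : Fin k, (j : ℕ) ≠ k - i - 1 → p' j = p j) ∨
     (∀ j : Fin k, (j : ℕ) ≠ k - i + 2 → p' j = p j))

/-- The (undirected, symmetric as stated) coordinate-change edges: two distinct
vertices with the same vector tuple, within each `L'_i`, between `L'_i` and `L_i`,
within `L_2` and within `L_k`. -/
def CoordE (k d : ℕ) (S : Finset (Vec d)) (α β : Vert k d) : Prop :=
  ∃ t t' p x x', α = Vert.node t p x ∧ β = Vert.node t' p x' ∧ α ≠ β ∧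
    ((∃ i, α ∈ setL' k d S i ∧ β ∈ setL' k d S i) ∨
     (∃ i, α ∈ setL' k d S i ∧ β ∈ setL k d S i) ∨
     (∃ i, α ∈ setL k d S i ∧ β ∈ setL' k d S i) ∨
     (α ∈ setL k d S 2 ∧ β ∈ setL k d S 2) ∨
     (α ∈ setL k d S k ∧ β ∈ setL k d S k))

/-- The directed `a`-type back edges: from `L_i ∪ L'_i` to the matching prefix in `A_i`;
from `A_i` to every vertex of `L'_4` with the matching prefix; and from `A_{k-1}`
to every vertex of `A_i` with the same first vector `a_1`. -/
def ABack (k d : ℕ) (S : Finset (Vec d)) (α β : Vert k d) : Prop :=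
  (∃ i t p x p' x', (α ∈ setL k d S i ∨ α ∈ setL' k d S i) ∧ β ∈ setA k d S i ∧
      α = Vert.node t p x ∧ β = Vert.node (Tag.A i) p' x' ∧
      (∀ j : Fin k, (j : ℕ) < k - i → p' j = p j)) ∨
  (∃ i p x p' x', α ∈ setA k d S i ∧ β ∈ setL' k d S 4 ∧
      α = Vert.node (Tag.A i) p x ∧ β = Vert.node (Tag.L' 4) p' x' ∧
      (∀ j : Fin k, (j : ℕ) < k - i → p' j = p j)) ∨
  (∃ i p x p' x', α ∈ setA k d S (k - 1) ∧ β ∈ setA k d S i ∧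
      α = Vert.node (Tag.A (k - 1)) p x ∧ β = Vert.node (Tag.A i) p' x' ∧
      (∀ j : Fin k, (j : ℕ) = 0 → p' j = p j))

/-- The directed `b`-type back edges: from `B_i` to every vertex of `L_i ∪ L'_i` with
the matching suffix; from every vertex of `L'_{k-2}` to the vertex of `B_i` with the
matching suffix; and from `B_i` to the vertex of `B_3` with the same last vector. -/
def BBack (k d : ℕ) (S : Finset (Vec d)) (α β : Vert k d) : Prop :=
  (∃ i t p x p' x', α ∈ setB k d S i ∧ (β ∈ setL k d S i ∨ β ∈ setL' k d S i) ∧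
      α = Vert.node (Tag.B i) p x ∧ β = Vert.node t p' x' ∧
      (∀ j : Fin k, k - i + 2 ≤ (j : ℕ) → p j = p' j)) ∨
  (∃ i p x p' x', α ∈ setL' k d S (k - 2) ∧ β ∈ setB k d S i ∧
      α = Vert.node (Tag.L' (k - 2)) p x ∧ β = Vert.node (Tag.B i) p' x' ∧
      (∀ j : Fin k, k - i + 2 ≤ (j : ℕ) → p' j = p j)) ∨
  (∃ i p x p' x', α ∈ setB k d S i ∧ β ∈ setB k d S 3 ∧
      α = Vert.node (Tag.B i) p x ∧ β = Vert.node (Tag.B 3) p' x' ∧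
      (∀ j : Fin k, (j : ℕ) = k - 1 → p' j = p j))

/-- The directed `ba`-type back edges: from every vertex of `B_i` to every vertex of
`A_i`, for `4 ≤ i ≤ k-2`. -/
def BABack (k d : ℕ) (S : Finset (Vec d)) (α β : Vert k d) : Prop :=
  ∃ i, 4 ≤ i ∧ i ≤ k - 2 ∧ α ∈ setB k d S i ∧ β ∈ setA k d S i

/-- The directed fixed edges: `L'_{k-2} → v`, `v → L_1 ∪ L_2`, `L_k ∪ L_{k+1} → u`,
and `u → L'_4`. -/
def FixedE (k d : ℕ) (S : Finset (Vec d)) (α β : Vert k d) : Prop :=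
  (α ∈ setL' k d S (k - 2) ∧ β = Vert.vv) ∨
  (α = Vert.vv ∧ (β ∈ setL k d S 1 ∨ β ∈ setL k d S 2)) ∨
  ((α ∈ setL k d S k ∨ α ∈ setL k d S (k + 1)) ∧ β = Vert.uu) ∨
  (α = Vert.uu ∧ β ∈ setL' k d S 4)

/-- The adjacency relation of the graph `G` (undirected edges appear in both
directions). -/
def Adj (k d : ℕ) (S : Finset (Vec d)) (α β : Vert k d) : Prop :=
  SwapE k d S α β ∨ SwapE k d S β α ∨ VecE k d S α β ∨ VecE k d S β α ∨
  CoordE k d S α β ∨ ABack k d S α β ∨ BBack k d S α β ∨ BABack k d S α β ∨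
  FixedE k d S α β

/-! ### Loops and covers (Section 5) -/

/-- `t` is the first time at which the walk `P` (of length `n`) visits `L_i`. -/
def FirstVisit (k d : ℕ) (S : Finset (Vec d)) (P : ℕ → Vert k d) (n i t : ℕ) : Prop :=
  t ≤ n ∧ P t ∈ setL k d S i ∧ ∀ s, s < t → P s ∉ setL k d S i

/-- `t` is the last time at which the walk `P` (of length `n`) visits `L_i`. -/
def LastVisit (k d : ℕ) (S : Finset (Vec d)) (P : ℕ → Vert k d) (n i t : ℕ) : Prop :=
  t ≤ n ∧ P t ∈ setL k d S i ∧ ∀ s, t < s → s ≤ n → P s ∉ setL k d S i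

/-- The layer `L_i` is in a loop: the walk `P` visits `L_i` at least twice. -/
def InLoop (k d : ℕ) (S : Finset (Vec d)) (P : ℕ → Vert k d) (n i : ℕ) : Prop :=
  ∃ t1 t2, t1 < t2 ∧ t2 ≤ n ∧ P t1 ∈ setL k d S i ∧ P t2 ∈ setL k d S i

/-- The walk `P` visits `A`. -/
def VisitsA (k d : ℕ) (S : Finset (Vec d)) (P : ℕ → Vert k d) (n : ℕ) : Prop :=
  ∃ t ≤ n, P t ∈ setAall k d S

/-- The walk `P` visits `B`. -/
def VisitsB (k d : ℕ) (S : Finset (Vec d)) (P : ℕ → Vert k d) (n : ℕ) : Prop :=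
  ∃ t ≤ n, P t ∈ setBall k d S

/-- The layer `L_i` covers the layer `L_m` (with respect to the walk `P` of length `n`):
for `3 ≤ i ≤ k-1`, `L_i` covers `L_{i-1}` if `L_{i-1}` is not in a loop, `L_i` is in a
loop, and the first and last vertices of `P` in `L_i` differ in the vector `b_{k-i+3}`
(0-based position `k-i+2`) and in the coordinate array; symmetrically `L_i` covers
`L_{i+1}` using the vector `a_{k-i}` (0-based position `k-i-1`).  Additionally `L_4`
covers both `L_3` and `L_2` if `P` visits `A`, and `L_{k-2}` covers both `L_{k-1}` and
`L_k` if `P` visits `B`. -/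
def Covers (k d : ℕ) (S : Finset (Vec d)) (P : ℕ → Vert k d) (n : ℕ) (i m : ℕ) : Prop :=
  (3 ≤ i ∧ i ≤ k - 1 ∧ m + 1 = i ∧ ¬ InLoop k d S P n m ∧ InLoop k d S P n i ∧
    ∃ t1 t2 p1 x1 p2 x2, FirstVisit k d S P n i t1 ∧ LastVisit k d S P n i t2 ∧
      P t1 = Vert.node (Tag.L i) p1 x1 ∧ P t2 = Vert.node (Tag.L i) p2 x2 ∧
      (∀ j : Fin k, (j : ℕ) = k - i + 2 → p1 j ≠ p2 j) ∧ x1 ≠ x2) ∨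
  (3 ≤ i ∧ i ≤ k - 1 ∧ m = i + 1 ∧ ¬ InLoop k d S P n m ∧ InLoop k d S P n i ∧
    ∃ t1 t2 p1 x1 p2 x2, FirstVisit k d S P n i t1 ∧ LastVisit k d S P n i t2 ∧
      P t1 = Vert.node (Tag.L i) p1 x1 ∧ P t2 = Vert.node (Tag.L i) p2 x2 ∧
      (∀ j : Fin k, (j : ℕ) = k - i - 1 → p1 j ≠ p2 j) ∧ x1 ≠ x2) ∨
  (i = 4 ∧ (m = 3 ∨ m = 2) ∧ VisitsA k d S P n) ∨
  (i = k - 2 ∧ (m = k - 1 ∨ m = k) ∧ VisitsB k d S P n)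


/-! ### Auxiliary lemmas for Observation 5.3 -/

section ObsAux

variable {k d : ℕ} {S : Finset (Vec d)}

lemma eqLL {w : Vert k d} {i j : ℕ} (h1 : w ∈ setL k d S i) (h2 : w ∈ setL k d S j) :
    i = j := by
  obtain ⟨p, x, rfl, -⟩ := h1
  obtain ⟨p', x', he, -⟩ := h2
  injection he with ht hp hx
  injection ht with h

lemma eqL'L' {w : Vert k d} {i j : ℕ} (h1 : w ∈ setL' k d S i) (h2 : w ∈ setL' k d S j) :
    i = j := by
  obtain ⟨p, x, rfl, -, -, -⟩ := h1
  obtain ⟨p', x', he, -, -, -⟩ := h2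
  injection he with ht hp hx
  injection ht with h

lemma eqAA {w : Vert k d} {i j : ℕ} (h1 : w ∈ setA k d S i) (h2 : w ∈ setA k d S j) :
    i = j := by
  obtain ⟨p, x, rfl, -, -, -, -⟩ := h1
  obtain ⟨p', x', he, -, -, -, -⟩ := h2
  injection he with ht hp hx
  injection ht with h

lemma eqBB {w : Vert k d} {i j : ℕ} (h1 : w ∈ setB k d S i) (h2 : w ∈ setB k d S j) :
    i = j := by
  obtain ⟨p, x, rfl, -, -, -, -⟩ := h1
  obtain ⟨p', x', he, -, -, -, -⟩ := h2
  injection he with ht hp hx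
  injection ht with h

lemma neLL' {w : Vert k d} {i j : ℕ} (h1 : w ∈ setL k d S i) (h2 : w ∈ setL' k d S j) :
    False := by
  obtain ⟨p, x, rfl, -⟩ := h1
  obtain ⟨p', x', he, -, -, -⟩ := h2
  injection he with ht hp hx
  exact Tag.noConfusion ht

lemma neLA {w : Vert k d} {i j : ℕ} (h1 : w ∈ setL k d S i) (h2 : w ∈ setA k d S j) :
    False := by
  obtain ⟨p, x, rfl, -⟩ := h1
  obtain ⟨p', x', he, -, -, -, -⟩ := h2
  injection he with ht hp hx
  exact Tag.noConfusion ht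

lemma neLB {w : Vert k d} {i j : ℕ} (h1 : w ∈ setL k d S i) (h2 : w ∈ setB k d S j) :
    False := by
  obtain ⟨p, x, rfl, -⟩ := h1
  obtain ⟨p', x', he, -, -, -, -⟩ := h2
  injection he with ht hp hx
  exact Tag.noConfusion ht

lemma neL'A {w : Vert k d} {i j : ℕ} (h1 : w ∈ setL' k d S i) (h2 : w ∈ setA k d S j) :
    False := by
  obtain ⟨p, x, rfl, -, -, -⟩ := h1
  obtain ⟨p', x', he, -, -, -, -⟩ := h2
  injection he with ht hp hx
  exact Tag.noConfusion ht

lemma neL'B {w : Vert k d} {i j : ℕ} (h1 : w ∈ setL' k d S i) (h2 : w ∈ setB k d S j) :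
    False := by
  obtain ⟨p, x, rfl, -, -, -⟩ := h1
  obtain ⟨p', x', he, -, -, -, -⟩ := h2
  injection he with ht hp hx
  exact Tag.noConfusion ht

lemma neAB {w : Vert k d} {i j : ℕ} (h1 : w ∈ setA k d S i) (h2 : w ∈ setB k d S j) :
    False := by
  obtain ⟨p, x, rfl, -, -, -, -⟩ := h1
  obtain ⟨p', x', he, -, -, -, -⟩ := h2
  injection he with ht hp hx
  exact Tag.noConfusion ht

lemma rangeL {w : Vert k d} {i : ℕ} (h : w ∈ setL k d S i) :
    i = 1 ∨ i = k + 1 ∨ (2 ≤ i ∧ i ≤ k) := by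
  obtain ⟨p, x, -, hc⟩ := h
  rcases hc with ⟨h1, -, -⟩ | ⟨h1, -, -⟩ | ⟨h1, h2, -, -⟩
  · exact Or.inl h1
  · exact Or.inr (Or.inl h1)
  · exact Or.inr (Or.inr ⟨h1, h2⟩)

lemma rangeL' {w : Vert k d} {i : ℕ} (h : w ∈ setL' k d S i) : 3 ≤ i ∧ i ≤ k - 1 := by
  obtain ⟨p, x, -, h1, h2, -⟩ := h
  exact ⟨h1, h2⟩

lemma rangeA {w : Vert k d} {i : ℕ} (h : w ∈ setA k d S i) : 4 ≤ i ∧ i ≤ k - 1 := by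
  obtain ⟨p, x, -, h1, h2, -, -⟩ := h
  exact ⟨h1, h2⟩

lemma rangeB {w : Vert k d} {i : ℕ} (h : w ∈ setB k d S i) : 3 ≤ i ∧ i ≤ k - 2 := by
  obtain ⟨p, x, -, h1, h2, -, -⟩ := h
  exact ⟨h1, h2⟩

/-- A coarse classification of all edges of `G` that avoid `u`, `v` and the `ba`-type
back edges, recording only the layers of the two endpoints. -/
def AdjShape (k d : ℕ) (S : Finset (Vec d)) (α β : Vert k d) : Prop :=
  (∃ i, 1 ≤ i ∧ i ≤ k ∧ ((α ∈ setL k d S i ∧ β ∈ setL k d S (i + 1)) ∨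
      (α ∈ setL k d S (i + 1) ∧ β ∈ setL k d S i))) ∨
  (∃ i, (α ∈ setL k d S i ∨ α ∈ setL' k d S i) ∧ (β ∈ setL k d S i ∨ β ∈ setL' k d S i)) ∨
  (∃ i, (α ∈ setL k d S i ∨ α ∈ setL' k d S i) ∧ β ∈ setA k d S i) ∨
  (∃ i, α ∈ setA k d S i ∧ β ∈ setL' k d S 4) ∨
  (α ∈ setA k d S (k - 1) ∧ ∃ i, β ∈ setA k d S i) ∨
  (∃ i, α ∈ setB k d S i ∧ (β ∈ setL k d S i ∨ β ∈ setL' k d S i)) ∨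
  (α ∈ setL' k d S (k - 2) ∧ ∃ i, β ∈ setB k d S i) ∨
  ((∃ i, α ∈ setB k d S i) ∧ β ∈ setB k d S 3)

lemma adj_shape (hk : 5 ≤ k) {α β : Vert k d} (h : Adj k d S α β)
    (hαu : α ≠ Vert.uu) (hαv : α ≠ Vert.vv) (hβu : β ≠ Vert.uu) (hβv : β ≠ Vert.vv)
    (hba : ¬ BABack k d S α β) : AdjShape k d S α β := by
  unfold AdjShape
  rcases h with h | h | h | h | h | h | h | h | h
  · rcases h with ⟨i, p, x, p', x', h2, h3, -, -, ha, hb, -, -⟩ |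
      ⟨p, x, p', x', -, -, ha, hb, -⟩ | ⟨p, x, p', x', -, -, ha, hb, -⟩
    · exact Or.inl ⟨i, by omega, by omega, Or.inl ⟨ha, hb⟩⟩
    · exact Or.inl ⟨1, by omega, by omega, Or.inl ⟨ha, hb⟩⟩
    · exact Or.inl ⟨k, by omega, by omega, Or.inr ⟨ha, hb⟩⟩
  · rcases h with ⟨i, p, x, p', x', h2, h3, -, -, hb, ha, -, -⟩ |
      ⟨p, x, p', x', -, -, hb, ha, -⟩ | ⟨p, x, p', x', -, -, hb, ha, -⟩
    · exact Or.inl ⟨i, by omega, by omega, Or.inr ⟨ha, hb⟩⟩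
    · exact Or.inl ⟨1, by omega, by omega, Or.inr ⟨ha, hb⟩⟩
    · exact Or.inl ⟨k, by omega, by omega, Or.inl ⟨ha, hb⟩⟩
  · obtain ⟨i, p, x, p', x', -, -, -, -, ha, hb, -, -⟩ := h
    exact Or.inr (Or.inl ⟨i, Or.inl ha, Or.inr hb⟩)
  · obtain ⟨i, p, x, p', x', -, -, -, -, hb, ha, -, -⟩ := h
    exact Or.inr (Or.inl ⟨i, Or.inr ha, Or.inl hb⟩)
  · obtain ⟨t, t', p, x, x', -, -, -, hc⟩ := h
    rcases hc with ⟨i, ha, hb⟩ | ⟨i, ha, hb⟩ | ⟨i, ha, hb⟩ | ⟨ha, hb⟩ | ⟨ha, hb⟩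
    · exact Or.inr (Or.inl ⟨i, Or.inr ha, Or.inr hb⟩)
    · exact Or.inr (Or.inl ⟨i, Or.inr ha, Or.inl hb⟩)
    · exact Or.inr (Or.inl ⟨i, Or.inl ha, Or.inr hb⟩)
    · exact Or.inr (Or.inl ⟨2, Or.inl ha, Or.inl hb⟩)
    · exact Or.inr (Or.inl ⟨k, Or.inl ha, Or.inl hb⟩)
  · rcases h with ⟨i, t, p, x, p', x', ha, hb, -, -, -⟩ |
      ⟨i, p, x, p', x', ha, hb, -, -, -⟩ | ⟨i, p, x, p', x', ha, hb, -, -, -⟩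
    · exact Or.inr (Or.inr (Or.inl ⟨i, ha, hb⟩))
    · exact Or.inr (Or.inr (Or.inr (Or.inl ⟨i, ha, hb⟩)))
    · exact Or.inr (Or.inr (Or.inr (Or.inr (Or.inl ⟨ha, i, hb⟩))))
  · rcases h with ⟨i, t, p, x, p', x', ha, hb, -, -, -⟩ |
      ⟨i, p, x, p', x', ha, hb, -, -, -⟩ | ⟨i, p, x, p', x', ha, hb, -, -, -⟩
    · exact Or.inr (Or.inr (Or.inr (Or.inr (Or.inr (Or.inl ⟨i, ha, hb⟩)))))
    · exact Or.inr (Or.inr (Or.inr (Or.inr (Or.inr (Or.inr (Or.inl ⟨ha, i, hb⟩))))))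
    · exact Or.inr (Or.inr (Or.inr (Or.inr (Or.inr (Or.inr (Or.inr ⟨⟨i, ha⟩, hb⟩))))))
  · exact absurd h hba
  · rcases h with ⟨-, hβ'⟩ | ⟨hα', -⟩ | ⟨-, hβ'⟩ | ⟨hα', -⟩
    · exact absurd hβ' hβv
    · exact absurd hα' hαv
    · exact absurd hβ' hβu
    · exact absurd hα' hαu

/-- First exit of a walk from a set. -/
lemma cross_exit {V : Type*} {X : Set V} {P : ℕ → V} {a b : ℕ} (hab : a ≤ b)
    (ha : P a ∈ X) (hb : P b ∉ X) :
    ∃ s, a ≤ s ∧ s < b ∧ P s ∈ X ∧ P (s + 1) ∉ X := by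
  by_contra hcon
  push_neg at hcon
  have key : ∀ m, a + m ≤ b → P (a + m) ∈ X := by
    intro m
    induction m with
    | zero => intro _; simpa using ha
    | succ m ih =>
      intro hm
      have h1 := ih (by omega)
      exact hcon (a + m) (by omega) (by omega) h1
  have hfin := key (b - a) (by omega)
  rw [Nat.add_sub_cancel' hab] at hfin
  exact hb hfin

/-- First entry of a walk into a set. -/
lemma cross_enter {V : Type*} {X : Set V} {P : ℕ → V} {a b : ℕ} (hab : a ≤ b)
    (ha : P a ∉ X) (hb : P b ∈ X) :
    ∃ s, a ≤ s ∧ s < b ∧ P s ∉ X ∧ P (s + 1) ∈ X := by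
  obtain ⟨s, h1, h2, h3, h4⟩ := cross_exit (X := Xᶜ) hab (by simpa using ha)
    (by simpa using hb)
  exact ⟨s, h1, h2, by simpa using h3, by simpa using h4⟩

/-- The region below `L_4`. -/
def sE (k d : ℕ) (S : Finset (Vec d)) : Set (Vert k d) :=
  {w | w ∈ setL k d S 1 ∨ w ∈ setL k d S 2 ∨ w ∈ setL k d S 3 ∨ w ∈ setL' k d S 3 ∨
    w ∈ setB k d S 3}

lemma sE_L {w : Vert k d} {i : ℕ} (hw : w ∈ sE k d S) (h : w ∈ setL k d S i) : i ≤ 3 := by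
  simp only [sE, Set.mem_setOf_eq] at hw
  rcases hw with h' | h' | h' | h' | h'
  · have := eqLL h h'; omega
  · have := eqLL h h'; omega
  · have := eqLL h h'; omega
  · exact (neLL' h h').elim
  · exact (neLB h h').elim

lemma sE_L' {w : Vert k d} {i : ℕ} (hw : w ∈ sE k d S) (h : w ∈ setL' k d S i) : i = 3 := by
  simp only [sE, Set.mem_setOf_eq] at hw
  rcases hw with h' | h' | h' | h' | h'
  · exact (neLL' h' h).elim
  · exact (neLL' h' h).elim
  · exact (neLL' h' h).elim
  · exact eqL'L' h h'
  · exact (neL'B h h').elim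

lemma sE_A {w : Vert k d} {i : ℕ} (hw : w ∈ sE k d S) (h : w ∈ setA k d S i) : False := by
  simp only [sE, Set.mem_setOf_eq] at hw
  rcases hw with h' | h' | h' | h' | h'
  · exact neLA h' h
  · exact neLA h' h
  · exact neLA h' h
  · exact neL'A h' h
  · exact neAB h h'

lemma sE_B {w : Vert k d} {i : ℕ} (hw : w ∈ sE k d S) (h : w ∈ setB k d S i) : i = 3 := by
  simp only [sE, Set.mem_setOf_eq] at hw
  rcases hw with h' | h' | h' | h' | h'
  · exact (neLB h' h).elim
  · exact (neLB h' h).elim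
  · exact (neLB h' h).elim
  · exact (neL'B h' h).elim
  · exact eqBB h h'

lemma sE_introL (hk : 5 ≤ k) {w : Vert k d} {i : ℕ} (h : w ∈ setL k d S i) (hi : i ≤ 3) :
    w ∈ sE k d S := by
  simp only [sE, Set.mem_setOf_eq]
  rcases rangeL h with rfl | rfl | ⟨h2, h3⟩
  · exact Or.inl h
  · exact absurd hi (by omega)
  · rcases (by omega : i = 2 ∨ i = 3) with rfl | rfl
    · exact Or.inr (Or.inl h)
    · exact Or.inr (Or.inr (Or.inl h))

lemma sE_introL' {w : Vert k d} {i : ℕ} (h : w ∈ setL' k d S i) (hi : i ≤ 3) :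
    w ∈ sE k d S := by
  simp only [sE, Set.mem_setOf_eq]
  have hr := rangeL' h
  obtain rfl : i = 3 := by omega
  exact Or.inr (Or.inr (Or.inr (Or.inl h)))

lemma sE_introB {w : Vert k d} {i : ℕ} (h : w ∈ setB k d S i) (hi : i ≤ 3) :
    w ∈ sE k d S := by
  simp only [sE, Set.mem_setOf_eq]
  have hr := rangeB h
  obtain rfl : i = 3 := by omega
  exact Or.inr (Or.inr (Or.inr (Or.inr h)))

lemma closE (hk : 5 ≤ k) {α β : Vert k d} (hsh : AdjShape k d S α β) (hα : α ∈ sE k d S) :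
    β ∈ sE k d S ∨ β ∈ setL k d S 4 := by
  unfold AdjShape at hsh
  rcases hsh with ⟨i, hi1, hik, ⟨ha, hb⟩ | ⟨ha, hb⟩⟩ | ⟨i, ha, hb⟩ | ⟨i, ha, hb⟩ |
    ⟨i, ha, hb⟩ | ⟨ha, i, hb⟩ | ⟨i, ha, hb⟩ | ⟨ha, i, hb⟩ | ⟨⟨i, ha⟩, hb⟩
  · have h3 := sE_L hα ha
    by_cases hc : i + 1 ≤ 3
    · exact Or.inl (sE_introL hk hb hc)
    · have he : i + 1 = 4 := by omega
      rw [he] at hb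
      exact Or.inr hb
  · have h3 := sE_L hα ha
    exact Or.inl (sE_introL hk hb (by omega))
  · have hi : i ≤ 3 := by
      rcases ha with h | h
      · exact sE_L hα h
      · exact le_of_eq (sE_L' hα h)
    rcases hb with h | h
    · exact Or.inl (sE_introL hk h hi)
    · exact Or.inl (sE_introL' h hi)
  · have h4 := (rangeA hb).1
    have hi : i ≤ 3 := by
      rcases ha with h | h
      · exact sE_L hα h
      · exact le_of_eq (sE_L' hα h)
    exact absurd h4 (by omega)
  · exact (sE_A hα ha).elim
  · exact (sE_A hα ha).elim
  · have h3 := sE_B hα ha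
    rcases hb with h | h
    · exact Or.inl (sE_introL hk h (by omega))
    · exact Or.inl (sE_introL' h (by omega))
  · have h3 := sE_L' hα ha
    have hr := rangeB hb
    exact Or.inl (sE_introB hb (by omega))
  · exact Or.inl (sE_introB hb (by omega))

/-- The region reachable after visiting `A` without passing through `L_4`. -/
def sD (k d : ℕ) (S : Finset (Vec d)) : Set (Vert k d) :=
  {w | (∃ i, w ∈ setA k d S i) ∨ w ∈ setL' k d S 4 ∨ w ∈ setL k d S 1 ∨
    w ∈ setL k d S 2 ∨ w ∈ setL k d S 3 ∨ w ∈ setL' k d S 3 ∨ w ∈ setB k d S 3 ∨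
    w ∈ setB k d S 4}

lemma sD_L {w : Vert k d} {i : ℕ} (hw : w ∈ sD k d S) (h : w ∈ setL k d S i) : i ≤ 3 := by
  simp only [sD, Set.mem_setOf_eq] at hw
  rcases hw with ⟨j, h'⟩ | h' | h' | h' | h' | h' | h' | h'
  · exact (neLA h h').elim
  · exact (neLL' h h').elim
  · have := eqLL h h'; omega
  · have := eqLL h h'; omega
  · have := eqLL h h'; omega
  · exact (neLL' h h').elim
  · exact (neLB h h').elim
  · exact (neLB h h').elim

lemma sD_L' {w : Vert k d} {i : ℕ} (hw : w ∈ sD k d S) (h : w ∈ setL' k d S i) : i ≤ 4 := by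
  simp only [sD, Set.mem_setOf_eq] at hw
  rcases hw with ⟨j, h'⟩ | h' | h' | h' | h' | h' | h' | h'
  · exact (neL'A h h').elim
  · have := eqL'L' h h'; omega
  · exact (neLL' h' h).elim
  · exact (neLL' h' h).elim
  · exact (neLL' h' h).elim
  · have := eqL'L' h h'; omega
  · exact (neL'B h h').elim
  · exact (neL'B h h').elim

lemma sD_B {w : Vert k d} {i : ℕ} (hw : w ∈ sD k d S) (h : w ∈ setB k d S i) : i ≤ 4 := by
  simp only [sD, Set.mem_setOf_eq] at hw
  rcases hw with ⟨j, h'⟩ | h' | h' | h' | h' | h' | h' | h'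
  · exact (neAB h' h).elim
  · exact (neL'B h' h).elim
  · exact (neLB h' h).elim
  · exact (neLB h' h).elim
  · exact (neLB h' h).elim
  · exact (neL'B h' h).elim
  · have := eqBB h h'; omega
  · have := eqBB h h'; omega

lemma sD_introA {w : Vert k d} {i : ℕ} (h : w ∈ setA k d S i) : w ∈ sD k d S := by
  simp only [sD, Set.mem_setOf_eq]
  exact Or.inl ⟨i, h⟩

lemma sD_introL (hk : 5 ≤ k) {w : Vert k d} {i : ℕ} (h : w ∈ setL k d S i) (hi : i ≤ 3) :
    w ∈ sD k d S := by
  simp only [sD, Set.mem_setOf_eq]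
  rcases rangeL h with rfl | rfl | ⟨h2, h3⟩
  · exact Or.inr (Or.inr (Or.inl h))
  · exact absurd hi (by omega)
  · rcases (by omega : i = 2 ∨ i = 3) with rfl | rfl
    · exact Or.inr (Or.inr (Or.inr (Or.inl h)))
    · exact Or.inr (Or.inr (Or.inr (Or.inr (Or.inl h))))

lemma sD_introL' {w : Vert k d} {i : ℕ} (h : w ∈ setL' k d S i) (hi : i ≤ 4) :
    w ∈ sD k d S := by
  simp only [sD, Set.mem_setOf_eq]
  have hr := rangeL' h
  rcases (by omega : i = 3 ∨ i = 4) with rfl | rfl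
  · exact Or.inr (Or.inr (Or.inr (Or.inr (Or.inr (Or.inl h)))))
  · exact Or.inr (Or.inl h)

lemma sD_introB {w : Vert k d} {i : ℕ} (h : w ∈ setB k d S i) (hi : i ≤ 4) :
    w ∈ sD k d S := by
  simp only [sD, Set.mem_setOf_eq]
  have hr := rangeB h
  rcases (by omega : i = 3 ∨ i = 4) with rfl | rfl
  · exact Or.inr (Or.inr (Or.inr (Or.inr (Or.inr (Or.inr (Or.inl h))))))
  · exact Or.inr (Or.inr (Or.inr (Or.inr (Or.inr (Or.inr (Or.inr h))))))

lemma closD (hk : 5 ≤ k) {α β : Vert k d} (hsh : AdjShape k d S α β) (hα : α ∈ sD k d S) :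
    β ∈ sD k d S ∨ β ∈ setL k d S 4 := by
  unfold AdjShape at hsh
  rcases hsh with ⟨i, hi1, hik, ⟨ha, hb⟩ | ⟨ha, hb⟩⟩ | ⟨i, ha, hb⟩ | ⟨i, ha, hb⟩ |
    ⟨i, ha, hb⟩ | ⟨ha, i, hb⟩ | ⟨i, ha, hb⟩ | ⟨ha, i, hb⟩ | ⟨⟨i, ha⟩, hb⟩
  · have h3 := sD_L hα ha
    by_cases hc : i + 1 ≤ 3
    · exact Or.inl (sD_introL hk hb hc)
    · have he : i + 1 = 4 := by omega
      rw [he] at hb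
      exact Or.inr hb
  · have h3 := sD_L hα ha
    exact Or.inl (sD_introL hk hb (by omega))
  · have hi : i ≤ 4 := by
      rcases ha with h | h
      · have := sD_L hα h; omega
      · exact sD_L' hα h
    rcases hb with h | h
    · by_cases hc : i ≤ 3
      · exact Or.inl (sD_introL hk h hc)
      · have he : i = 4 := by omega
        rw [he] at h
        exact Or.inr h
    · exact Or.inl (sD_introL' h hi)
  · exact Or.inl (sD_introA hb)
  · exact Or.inl (sD_introL' hb (by omega))
  · exact Or.inl (sD_introA hb)
  · have h34 := sD_B hα ha
    rcases hb with h | h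
    · by_cases hc : i ≤ 3
      · exact Or.inl (sD_introL hk h hc)
      · have he : i = 4 := by omega
        rw [he] at h
        exact Or.inr h
    · exact Or.inl (sD_introL' h h34)
  · have h4 := sD_L' hα ha
    have hr := rangeB hb
    exact Or.inl (sD_introB hb (by omega))
  · exact Or.inl (sD_introB hb (by omega))

/-- The region from which `B` can be entered without passing through `L_{k-2}`. -/
def sDp (k d : ℕ) (S : Finset (Vec d)) : Set (Vert k d) :=
  {w | (∃ i, w ∈ setB k d S i) ∨ w ∈ setL' k d S (k - 2) ∨ w ∈ setL k d S (k + 1) ∨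
    w ∈ setL k d S k ∨ w ∈ setL k d S (k - 1) ∨ w ∈ setL' k d S (k - 1) ∨
    w ∈ setA k d S (k - 1) ∨ w ∈ setA k d S (k - 2)}

lemma sDp_L {w : Vert k d} {i : ℕ} (hw : w ∈ sDp k d S) (h : w ∈ setL k d S i) :
    k - 1 ≤ i := by
  simp only [sDp, Set.mem_setOf_eq] at hw
  rcases hw with ⟨j, h'⟩ | h' | h' | h' | h' | h' | h' | h'
  · exact (neLB h h').elim
  · exact (neLL' h h').elim
  · have := eqLL h h'; omega
  · have := eqLL h h'; omega
  · have := eqLL h h'; omega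
  · exact (neLL' h h').elim
  · exact (neLA h h').elim
  · exact (neLA h h').elim

lemma sDp_L' {w : Vert k d} {i : ℕ} (hw : w ∈ sDp k d S) (h : w ∈ setL' k d S i) :
    k - 2 ≤ i := by
  simp only [sDp, Set.mem_setOf_eq] at hw
  rcases hw with ⟨j, h'⟩ | h' | h' | h' | h' | h' | h' | h'
  · exact (neL'B h h').elim
  · have := eqL'L' h h'; omega
  · exact (neLL' h' h).elim
  · exact (neLL' h' h).elim
  · exact (neLL' h' h).elim
  · have := eqL'L' h h'; omega
  · exact (neL'A h h').elim
  · exact (neL'A h h').elim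

lemma sDp_A {w : Vert k d} {i : ℕ} (hw : w ∈ sDp k d S) (h : w ∈ setA k d S i) :
    k - 2 ≤ i := by
  simp only [sDp, Set.mem_setOf_eq] at hw
  rcases hw with ⟨j, h'⟩ | h' | h' | h' | h' | h' | h' | h'
  · exact (neAB h h').elim
  · exact (neL'A h' h).elim
  · exact (neLA h' h).elim
  · exact (neLA h' h).elim
  · exact (neLA h' h).elim
  · exact (neL'A h' h).elim
  · have := eqAA h h'; omega
  · have := eqAA h h'; omega

lemma sDp_introB {w : Vert k d} {i : ℕ} (h : w ∈ setB k d S i) : w ∈ sDp k d S := by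
  simp only [sDp, Set.mem_setOf_eq]
  exact Or.inl ⟨i, h⟩

lemma sDp_introL (hk : 5 ≤ k) {w : Vert k d} {i : ℕ} (h : w ∈ setL k d S i)
    (hi : k - 1 ≤ i) : w ∈ sDp k d S := by
  simp only [sDp, Set.mem_setOf_eq]
  rcases rangeL h with rfl | rfl | ⟨h2, h3⟩
  · exact absurd hi (by omega)
  · exact Or.inr (Or.inr (Or.inl h))
  · rcases (by omega : i = k - 1 ∨ i = k) with rfl | rfl
    · exact Or.inr (Or.inr (Or.inr (Or.inr (Or.inl h))))
    · exact Or.inr (Or.inr (Or.inr (Or.inl h)))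

lemma sDp_introL' {w : Vert k d} {i : ℕ} (h : w ∈ setL' k d S i) (hi : k - 2 ≤ i) :
    w ∈ sDp k d S := by
  simp only [sDp, Set.mem_setOf_eq]
  have hr := rangeL' h
  rcases (by omega : i = k - 2 ∨ i = k - 1) with rfl | rfl
  · exact Or.inr (Or.inl h)
  · exact Or.inr (Or.inr (Or.inr (Or.inr (Or.inr (Or.inl h)))))

lemma sDp_introA {w : Vert k d} {i : ℕ} (h : w ∈ setA k d S i) (hi : k - 2 ≤ i) :
    w ∈ sDp k d S := by
  simp only [sDp, Set.mem_setOf_eq]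
  have hr := rangeA h
  rcases (by omega : i = k - 2 ∨ i = k - 1) with rfl | rfl
  · exact Or.inr (Or.inr (Or.inr (Or.inr (Or.inr (Or.inr (Or.inr h))))))
  · exact Or.inr (Or.inr (Or.inr (Or.inr (Or.inr (Or.inr (Or.inl h))))))

lemma closDp (hk : 5 ≤ k) {α β : Vert k d} (hsh : AdjShape k d S α β)
    (hβ : β ∈ sDp k d S) : α ∈ sDp k d S ∨ α ∈ setL k d S (k - 2) := by
  unfold AdjShape at hsh
  rcases hsh with ⟨i, hi1, hik, ⟨ha, hb⟩ | ⟨ha, hb⟩⟩ | ⟨i, ha, hb⟩ | ⟨i, ha, hb⟩ |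
    ⟨i, ha, hb⟩ | ⟨ha, i, hb⟩ | ⟨i, ha, hb⟩ | ⟨ha, i, hb⟩ | ⟨⟨i, ha⟩, hb⟩
  · have h1 := sDp_L hβ hb
    by_cases hc : i = k - 2
    · rw [hc] at ha
      exact Or.inr ha
    · exact Or.inl (sDp_introL hk ha (by omega))
  · have h1 := sDp_L hβ hb
    exact Or.inl (sDp_introL hk ha (by omega))
  · have hi : k - 2 ≤ i := by
      rcases hb with h | h
      · have := sDp_L hβ h; omega
      · exact sDp_L' hβ h
    rcases ha with h | h
    · by_cases hc : i = k - 2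
      · rw [hc] at h
        exact Or.inr h
      · exact Or.inl (sDp_introL hk h (by omega))
    · exact Or.inl (sDp_introL' h hi)
  · have hi := sDp_A hβ hb
    rcases ha with h | h
    · by_cases hc : i = k - 2
      · rw [hc] at h
        exact Or.inr h
      · exact Or.inl (sDp_introL hk h (by omega))
    · exact Or.inl (sDp_introL' h hi)
  · have h1 := sDp_L' hβ hb
    have h2 := rangeA ha
    exact Or.inl (sDp_introA ha (by omega))
  · exact Or.inl (sDp_introA ha (by omega))
  · exact Or.inl (sDp_introB ha)
  · exact Or.inl (sDp_introL' ha (by omega))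
  · exact Or.inl (sDp_introB ha)

/-- The region reachable from `B` without passing through `L_{k-2}`. -/
def sF (k d : ℕ) (S : Finset (Vec d)) : Set (Vert k d) :=
  {w | (∃ i, w ∈ setB k d S i) ∨ w ∈ setL' k d S (k - 2) ∨
    (∃ i, i ≤ k - 3 ∧ (w ∈ setL k d S i ∨ w ∈ setL' k d S i)) ∨
    (∃ i, i ≤ k - 2 ∧ w ∈ setA k d S i)}

lemma sF_L {w : Vert k d} {i : ℕ} (hw : w ∈ sF k d S) (h : w ∈ setL k d S i) :
    i ≤ k - 3 := by
  simp only [sF, Set.mem_setOf_eq] at hw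
  rcases hw with ⟨j, h'⟩ | h' | ⟨j, hj, h' | h'⟩ | ⟨j, hj, h'⟩
  · exact (neLB h h').elim
  · exact (neLL' h h').elim
  · have := eqLL h h'; omega
  · exact (neLL' h h').elim
  · exact (neLA h h').elim

lemma sF_L' {w : Vert k d} {i : ℕ} (hw : w ∈ sF k d S) (h : w ∈ setL' k d S i) :
    i ≤ k - 2 := by
  simp only [sF, Set.mem_setOf_eq] at hw
  rcases hw with ⟨j, h'⟩ | h' | ⟨j, hj, h' | h'⟩ | ⟨j, hj, h'⟩
  · exact (neL'B h h').elim
  · have := eqL'L' h h'; omega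
  · exact (neLL' h' h).elim
  · have := eqL'L' h h'; omega
  · exact (neL'A h h').elim

lemma sF_A {w : Vert k d} {i : ℕ} (hw : w ∈ sF k d S) (h : w ∈ setA k d S i) :
    i ≤ k - 2 := by
  simp only [sF, Set.mem_setOf_eq] at hw
  rcases hw with ⟨j, h'⟩ | h' | ⟨j, hj, h' | h'⟩ | ⟨j, hj, h'⟩
  · exact (neAB h h').elim
  · exact (neL'A h' h).elim
  · exact (neLA h' h).elim
  · exact (neL'A h' h).elim
  · have := eqAA h h'; omega

lemma sF_introB {w : Vert k d} {i : ℕ} (h : w ∈ setB k d S i) : w ∈ sF k d S := by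
  simp only [sF, Set.mem_setOf_eq]
  exact Or.inl ⟨i, h⟩

lemma sF_introL {w : Vert k d} {i : ℕ} (h : w ∈ setL k d S i) (hi : i ≤ k - 3) :
    w ∈ sF k d S := by
  simp only [sF, Set.mem_setOf_eq]
  exact Or.inr (Or.inr (Or.inl ⟨i, hi, Or.inl h⟩))

lemma sF_introL' {w : Vert k d} {i : ℕ} (h : w ∈ setL' k d S i) (hi : i ≤ k - 2) :
    w ∈ sF k d S := by
  simp only [sF, Set.mem_setOf_eq]
  by_cases hc : i ≤ k - 3
  · exact Or.inr (Or.inr (Or.inl ⟨i, hc, Or.inr h⟩))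
  · have hr := rangeL' h
    obtain rfl : i = k - 2 := by omega
    exact Or.inr (Or.inl h)

lemma sF_introA {w : Vert k d} {i : ℕ} (h : w ∈ setA k d S i) (hi : i ≤ k - 2) :
    w ∈ sF k d S := by
  simp only [sF, Set.mem_setOf_eq]
  exact Or.inr (Or.inr (Or.inr ⟨i, hi, h⟩))

lemma closF (hk : 5 ≤ k) {α β : Vert k d} (hsh : AdjShape k d S α β) (hα : α ∈ sF k d S) :
    β ∈ sF k d S ∨ β ∈ setL k d S (k - 2) := by
  unfold AdjShape at hsh
  rcases hsh with ⟨i, hi1, hik, ⟨ha, hb⟩ | ⟨ha, hb⟩⟩ | ⟨i, ha, hb⟩ | ⟨i, ha, hb⟩ |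
    ⟨i, ha, hb⟩ | ⟨ha, i, hb⟩ | ⟨i, ha, hb⟩ | ⟨ha, i, hb⟩ | ⟨⟨i, ha⟩, hb⟩
  · have h1 := sF_L hα ha
    by_cases hc : i + 1 ≤ k - 3
    · exact Or.inl (sF_introL hb hc)
    · have he : i + 1 = k - 2 := by omega
      rw [he] at hb
      exact Or.inr hb
  · have h1 := sF_L hα ha
    exact Or.inl (sF_introL hb (by omega))
  · have hi : i ≤ k - 2 := by
      rcases ha with h | h
      · have := sF_L hα h; omega
      · exact sF_L' hα h
    rcases hb with h | h
    · by_cases hc : i ≤ k - 3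
      · exact Or.inl (sF_introL h hc)
      · have he : i = k - 2 := by omega
        rw [he] at h
        exact Or.inr h
    · exact Or.inl (sF_introL' h hi)
  · have hi : i ≤ k - 2 := by
      rcases ha with h | h
      · have := sF_L hα h; omega
      · exact sF_L' hα h
    exact Or.inl (sF_introA hb hi)
  · have hi := sF_A hα ha
    have h2 := rangeA ha
    exact Or.inl (sF_introL' hb (by omega))
  · have hi := sF_A hα ha
    exact absurd hi (by omega)
  · have hr := rangeB ha
    rcases hb with h | h
    · by_cases hc : i ≤ k - 3
      · exact Or.inl (sF_introL h hc)
      · have he : i = k - 2 := by omega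
        rw [he] at h
        exact Or.inr h
    · exact Or.inl (sF_introL' h hr.2)
  · exact Or.inl (sF_introB hb)
  · exact Or.inl (sF_introB hb)

end ObsAux


/-- **Observation 5.3.**  Let `P` be a directed path in `G` from a
vertex of `L_1` to a vertex of `L_{k+1}` that contains neither `u`, nor `v`, nor any
`ba`-type back edge.  If `P` visits `A`, then `P` visits `L_4` both before and after
visiting `A`.  If `P` visits `B`, then `P` visits `L_{k-2}` both before and after
visiting `B`. -/
theorem visits_A_B_sandwich (k d : ℕ) (hk : 5 ≤ k) (hd : 1 ≤ d)
    (S : Finset (Vec d)) (hone : ones d ∈ S)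
    (P : ℕ → Vert k d) (n : ℕ) (hP : IsWalk (Adj k d S) P n)
    (h0 : P 0 ∈ setL k d S 1) (hn : P n ∈ setL k d S (k + 1))
    (huv : ∀ t ≤ n, P t ≠ Vert.uu ∧ P t ≠ Vert.vv)
    (hba : ∀ t, t < n → ¬ BABack k d S (P t) (P (t + 1))) :
    (∀ t ≤ n, P t ∈ setAall k d S →
      (∃ s, s < t ∧ P s ∈ setL k d S 4) ∧ (∃ s, t < s ∧ s ≤ n ∧ P s ∈ setL k d S 4)) ∧
    (∀ t ≤ n, P t ∈ setBall k d S →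
      (∃ s, s < t ∧ P s ∈ setL k d S (k - 2)) ∧
        (∃ s, t < s ∧ s ≤ n ∧ P s ∈ setL k d S (k - 2))) := by
  have hedge : ∀ s, s < n → AdjShape k d S (P s) (P (s + 1)) := by
    intro s hs
    exact adj_shape hk (hP s hs) (huv s (by omega)).1 (huv s (by omega)).2
      (huv (s + 1) (by omega)).1 (huv (s + 1) (by omega)).2 (hba s hs)
  constructor
  · intro t ht hA
    have hAj : ∃ j, P t ∈ setA k d S j := by
      simpa [setAall, Set.mem_iUnion] using hA
    obtain ⟨j, hAj⟩ := hAj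
    constructor
    · have hE0 : P 0 ∈ sE k d S := by
        simp only [sE, Set.mem_setOf_eq]
        exact Or.inl h0
      have hEt : P t ∉ sE k d S := fun h => sE_A h hAj
      obtain ⟨s, -, hst, hs1, hs2⟩ := cross_exit (Nat.zero_le t) hE0 hEt
      have hL4 := (closE hk (hedge s (by omega)) hs1).resolve_left hs2
      have hne : s + 1 ≠ t := by
        intro he
        exact neLA (he ▸ hL4) hAj
      exact ⟨s + 1, by omega, hL4⟩
    · have hDt : P t ∈ sD k d S := by
        simp only [sD, Set.mem_setOf_eq]
        exact Or.inl ⟨j, hAj⟩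
      have hDn : P n ∉ sD k d S := fun h => by have := sD_L h hn; omega
      obtain ⟨s, hts, hsn, hs1, hs2⟩ := cross_exit ht hDt hDn
      have hL4 := (closD hk (hedge s hsn) hs1).resolve_left hs2
      exact ⟨s + 1, by omega, by omega, hL4⟩
  · intro t ht hB
    have hBj : ∃ j, P t ∈ setB k d S j := by
      simpa [setBall, Set.mem_iUnion] using hB
    obtain ⟨j, hBj⟩ := hBj
    constructor
    · have hD0 : P 0 ∉ sDp k d S := fun h => by have := sDp_L h h0; omega
      have hDt : P t ∈ sDp k d S := by
        simp only [sDp, Set.mem_setOf_eq]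
        exact Or.inl ⟨j, hBj⟩
      obtain ⟨s, -, hst, hs1, hs2⟩ := cross_enter (Nat.zero_le t) hD0 hDt
      have hLk2 := (closDp hk (hedge s (by omega)) hs2).resolve_left hs1
      exact ⟨s, hst, hLk2⟩
    · have hFt : P t ∈ sF k d S := by
        simp only [sF, Set.mem_setOf_eq]
        exact Or.inl ⟨j, hBj⟩
      have hFn : P n ∉ sF k d S := fun h => by have := sF_L h hn; omega
      obtain ⟨s, hts, hsn, hs1, hs2⟩ := cross_exit ht hFt hFn
      have hLk2 := (closF hk (hedge s hsn) hs1).resolve_left hs2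
      exact ⟨s + 1, by omega, by omega, hLk2⟩

end DiamLB
end

section
/- (Section 5, intermediate claims) Let α = (a_1,…,a_{k-1}) ∈ L_1 and β = (a_2,…,a_k) ∈ L_{k+1}, and let P be a directed path in G from α to β. If P contains the vertex u or the vertex v, or if P contains a ba-type back edge, then the length of P is at least 2k-1. -/
namespace DiamLB

/-! Two potentials certify the bound.  `fromStart` never grows by more than one along an edge
and vanishes on `L_1`, so it bounds the distance from `α`; `toEnd` never drops by more than one
along an edge and vanishes on `L_{k+1}`, so it bounds the distance to `β`.  Their sum is
`2k - 1` at `u` and at `v`, and a `ba`-type edge leaves `B` (where `fromStart = k - 1`) for `A`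
(where `toEnd = k - 1`). -/

section Walk

variable {V : Type*} {R : V → V → Prop} {P : ℕ → V} {n : ℕ}

theorem IsWalk.le_start_add (hP : IsWalk R P n) {f : V → ℕ}
    (hf : ∀ a b, R a b → f b ≤ f a + 1) {t : ℕ} (ht : t ≤ n) : f (P t) ≤ f (P 0) + t := by
  induction t with
  | zero => simp
  | succ t ih =>
    have := hf _ _ (hP t ht)
    have := ih (by omega)
    omega

theorem IsWalk.le_end_add (hP : IsWalk R P n) {g : V → ℕ}
    (hg : ∀ a b, R a b → g a ≤ g b + 1) {t : ℕ} (ht : t ≤ n) :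
    g (P t) ≤ g (P n) + (n - t) := by
  induction ht using Nat.decreasingInduction with
  | self => simp
  | of_succ t ht ih =>
    have := hg _ _ (hP t ht)
    omega

end Walk

def fromStart (k : ℕ) {d : ℕ} : Vert k d → ℕ
  | .node (.L i) _ _ => i - 1
  | .node (.L' i) _ _ => i
  | .node (.A _) _ _ => 3
  | .node (.B _) _ _ => k - 1
  | .uu => k
  | .vv => k - 1

def toEnd (k : ℕ) {d : ℕ} : Vert k d → ℕ
  | .node (.L i) _ _ => k + 1 - i
  | .node (.L' i) _ _ => k + 2 - i
  | .node (.A _) _ _ => k - 1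
  | .node (.B _) _ _ => 3
  | .uu => k - 1
  | .vv => k

def PotentialStep (k d : ℕ) (α β : Vert k d) : Prop :=
  fromStart k β ≤ fromStart k α + 1 ∧ toEnd k α ≤ toEnd k β + 1

section Layers

variable {k d : ℕ} {S : Finset (Vec d)} {i : ℕ} {w : Vert k d}

theorem potentials_of_mem_setL (h : w ∈ setL k d S i) :
    fromStart k w = i - 1 ∧ toEnd k w = k + 1 - i ∧ 1 ≤ i ∧ i ≤ k + 1 := by
  obtain ⟨p, x, rfl, hi | hi | hi⟩ := h <;> exact ⟨rfl, rfl, by omega⟩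

theorem potentials_of_mem_setL' (h : w ∈ setL' k d S i) :
    fromStart k w = i ∧ toEnd k w = k + 2 - i ∧ 3 ≤ i ∧ i ≤ k - 1 := by
  obtain ⟨p, x, rfl, hi, hik, -⟩ := h
  exact ⟨rfl, rfl, hi, hik⟩

theorem potentials_of_mem_setA (h : w ∈ setA k d S i) :
    fromStart k w = 3 ∧ toEnd k w = k - 1 ∧ 4 ≤ i ∧ i ≤ k - 1 := by
  obtain ⟨p, x, rfl, hi, hik, -⟩ := h
  exact ⟨rfl, rfl, hi, hik⟩

theorem potentials_of_mem_setB (h : w ∈ setB k d S i) :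
    fromStart k w = k - 1 ∧ toEnd k w = 3 ∧ 3 ≤ i ∧ i ≤ k - 2 := by
  obtain ⟨p, x, rfl, hi, hik, -⟩ := h
  exact ⟨rfl, rfl, hi, hik⟩

end Layers

section Edges

variable {k d : ℕ} {S : Finset (Vec d)} {α β : Vert k d}

theorem SwapE.potentialStep (h : SwapE k d S α β) :
    PotentialStep k d α β ∧ PotentialStep k d β α := by
  unfold PotentialStep
  rcases h with ⟨_, _, _, _, _, -, -, -, -, hα, hβ, -⟩ | ⟨_, _, _, _, -, -, hα, hβ, -⟩ |
      ⟨_, _, _, _, -, -, hα, hβ, -⟩ <;>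
  · have := potentials_of_mem_setL hα; have := potentials_of_mem_setL hβ; omega

theorem VecE.potentialStep (h : VecE k d S α β) :
    PotentialStep k d α β ∧ PotentialStep k d β α := by
  obtain ⟨_, _, _, _, _, -, -, -, -, hα, hβ, -⟩ := h
  have := potentials_of_mem_setL hα
  have := potentials_of_mem_setL' hβ
  unfold PotentialStep
  omega

theorem CoordE.potentialStep (h : CoordE k d S α β) : PotentialStep k d α β := by
  obtain ⟨_, _, _, _, _, -, -, -, hmem⟩ := h
  unfold PotentialStep
  rcases hmem with ⟨i, hα, hβ⟩ | ⟨i, hα, hβ⟩ | ⟨i, hα, hβ⟩ | ⟨hα, hβ⟩ | ⟨hα, hβ⟩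
  · have := potentials_of_mem_setL' hα; have := potentials_of_mem_setL' hβ; omega
  · have := potentials_of_mem_setL' hα; have := potentials_of_mem_setL hβ; omega
  · have := potentials_of_mem_setL hα; have := potentials_of_mem_setL' hβ; omega
  all_goals have := potentials_of_mem_setL hα; have := potentials_of_mem_setL hβ; omega

theorem ABack.potentialStep (h : ABack k d S α β) : PotentialStep k d α β := by
  unfold PotentialStep
  rcases h with ⟨_, _, _, _, _, _, hα | hα, hβ, -⟩ | ⟨_, _, _, _, _, hα, hβ, -⟩ |
      ⟨_, _, _, _, _, hα, hβ, -⟩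
  · have := potentials_of_mem_setL hα; have := potentials_of_mem_setA hβ; omega
  · have := potentials_of_mem_setL' hα; have := potentials_of_mem_setA hβ; omega
  · have := potentials_of_mem_setA hα; have := potentials_of_mem_setL' hβ; omega
  · have := potentials_of_mem_setA hα; have := potentials_of_mem_setA hβ; omega

theorem BBack.potentialStep (h : BBack k d S α β) : PotentialStep k d α β := by
  unfold PotentialStep
  rcases h with ⟨_, _, _, _, _, _, hα, hβ | hβ, -⟩ | ⟨_, _, _, _, _, hα, hβ, -⟩ |
      ⟨_, _, _, _, _, hα, hβ, -⟩
  · have := potentials_of_mem_setB hα; have := potentials_of_mem_setL hβ; omega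
  · have := potentials_of_mem_setB hα; have := potentials_of_mem_setL' hβ; omega
  · have := potentials_of_mem_setL' hα; have := potentials_of_mem_setB hβ; omega
  · have := potentials_of_mem_setB hα; have := potentials_of_mem_setB hβ; omega

theorem BABack.potentialStep (h : BABack k d S α β) : PotentialStep k d α β := by
  obtain ⟨_, -, -, hα, hβ⟩ := h
  have := potentials_of_mem_setB hα
  have := potentials_of_mem_setA hβ
  unfold PotentialStep
  omega

theorem FixedE.potentialStep (h : FixedE k d S α β) : PotentialStep k d α β := by
  unfold PotentialStep
  rcases h with ⟨hα, rfl⟩ | ⟨rfl, hβ | hβ⟩ | ⟨hα | hα, rfl⟩ | ⟨rfl, hβ⟩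
  · have := potentials_of_mem_setL' hα; simp only [fromStart, toEnd] at *; omega
  · have := potentials_of_mem_setL hβ; simp only [fromStart, toEnd] at *; omega
  · have := potentials_of_mem_setL hβ; simp only [fromStart, toEnd] at *; omega
  · have := potentials_of_mem_setL hα; simp only [fromStart, toEnd] at *; omega
  · have := potentials_of_mem_setL hα; simp only [fromStart, toEnd] at *; omega
  · have := potentials_of_mem_setL' hβ; simp only [fromStart, toEnd] at *; omega

theorem Adj.potentialStep (h : Adj k d S α β) : PotentialStep k d α β := by
  rcases h with h | h | h | h | h | h | h | h | h
  exacts [h.potentialStep.1, h.potentialStep.2, h.potentialStep.1, h.potentialStep.2,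
    h.potentialStep, h.potentialStep, h.potentialStep, h.potentialStep, h.potentialStep]

end Edges

theorem detour_paths_long_general (k d : ℕ) (hd : 1 ≤ d)
    (S : Finset (Vec d))
    (a : Fin k → Vec d)
    (P : ℕ → Vert k d) (n : ℕ) (hP : IsWalk (Adj k d S) P n)
    (h0 : P 0 = Vert.node (Tag.L 1)
      (fun j => if (j : ℕ) < k - 1 then some (a j) else none) (fun _ => ⟨0, hd⟩))
    (hn : P n = Vert.node (Tag.L (k + 1))
      (fun j => if 1 ≤ (j : ℕ) then some (a j) else none) (fun _ => ⟨0, hd⟩))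
    (hdetour : (∃ t ≤ n, P t = Vert.uu ∨ P t = Vert.vv) ∨
      (∃ t, t < n ∧ BABack k d S (P t) (P (t + 1)))) :
    2 * k - 1 ≤ n := by
  have hstart : ∀ t ≤ n, fromStart k (P t) ≤ t := fun t ht => by
    simpa [h0, fromStart] using hP.le_start_add (fun _ _ h => (Adj.potentialStep h).1) ht
  have hend : ∀ t ≤ n, toEnd k (P t) ≤ n - t := fun t ht => by
    simpa [hn, toEnd] using hP.le_end_add (fun _ _ h => (Adj.potentialStep h).2) ht
  rcases hdetour with ⟨t, ht, hu | hv⟩ | ⟨t, ht, _, -, -, hB, hA⟩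
  · have := hstart t ht; have := hend t ht
    simp only [hu, fromStart, toEnd] at *; omega
  · have := hstart t ht; have := hend t ht
    simp only [hv, fromStart, toEnd] at *; omega
  · have := hstart t ht.le; have := hend (t + 1) ht
    have := potentials_of_mem_setB hB; have := potentials_of_mem_setA hA
    omega

/-- **Section 5, intermediate claims.**  Let
`α = (a_1, …, a_{k-1}) ∈ L_1` and `β = (a_2, …, a_k) ∈ L_{k+1}`, and let `P` be a
directed path in `G` from `α` to `β`.  If `P` contains the vertex `u` or the vertex
`v`, or if `P` contains a `ba`-type back edge, then the length of `P` is at least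
`2k-1`. -/
theorem detour_paths_long (k d : ℕ) (hk : 5 ≤ k) (hd : 1 ≤ d)
    (S : Finset (Vec d)) (hone : ones d ∈ S)
    (a : Fin k → Vec d) (ha : ∀ j, a j ∈ S)
    (P : ℕ → Vert k d) (n : ℕ) (hP : IsWalk (Adj k d S) P n)
    (h0 : P 0 = Vert.node (Tag.L 1)
      (fun j => if (j : ℕ) < k - 1 then some (a j) else none) (fun _ => ⟨0, hd⟩))
    (hn : P n = Vert.node (Tag.L (k + 1))
      (fun j => if 1 ≤ (j : ℕ) then some (a j) else none) (fun _ => ⟨0, hd⟩))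
    (hdetour : (∃ t ≤ n, P t = Vert.uu ∨ P t = Vert.vv) ∨
      (∃ t, t < n ∧ BABack k d S (P t) (P (t + 1)))) :
    2 * k - 1 ≤ n :=
  detour_paths_long_general k d hd S a P n hP h0 hn hdetour

end DiamLB
end
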